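/- One step of the linked-list Turing machine simulation is correct for left moves: under the analogous update allocating a new blank cell to the left when h.left = none, the resulting implementation configuration is (q', t') with t'(1) = s' and t'(i) = t(i−1) for i ≠ 1. -/

import Mathlib

/-! The tape read off a doubly-linked list `c 0, …, c n` with head `c k` is the word `S`
padded with blanks and shifted by `k`. For `k ≠ 0` a left move only rewrites the symbol of
`c k` and moves the head to `c (k - 1)`, which shifts the padded word by one. For `k = 0` the
update that allocates a fresh cell coincides with first linking a fresh blank cell in to the
left of `c 0`, which leaves the tape unchanged since blanks lie beyond the ends anyway, and
then making an ordinary move from index `1` of the longer list. -/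

inductive Dir | L | R

/-- A tape cell: optional left and right pointers and a symbol. -/
structure Cell (Γ L : Type*) where
  left : Option L
  right : Option L
  symbol : Γ

def followR {Γ L : Type*} (σ : L → Option (Cell Γ L)) : Option L → ℕ → Option L
  | ol, 0 => ol
  | ol, k + 1 => followR σ (ol.bind fun ℓ => (σ ℓ).bind Cell.right) k

def followL {Γ L : Type*} (σ : L → Option (Cell Γ L)) : Option L → ℕ → Option L
  | ol, 0 => ol
  | ol, k + 1 => followL σ (ol.bind fun ℓ => (σ ℓ).bind Cell.left) k

def symAt {Γ L : Type*} (σ : L → Option (Cell Γ L)) (B : Γ) (ol : Option L) : Γ :=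
  match ol.bind σ with
  | some c => c.symbol
  | none => B

/-- Tape induced by a head pointer. -/
def tapeOf {Γ L : Type*} (σ : L → Option (Cell Γ L)) (B : Γ) (h : L) : ℤ → Γ :=
  fun i =>
    if 0 ≤ i then symAt σ B (followR σ (some h) i.toNat)
    else symAt σ B (followL σ (some h) (-i).toNat)

/-- Left-move update: write `s'` to the head cell, allocate a fresh blank cell to the
left if needed, and move the head left. -/
def stepL {Γ L : Type*} [DecidableEq L] (σ : L → Option (Cell Γ L)) (B : Γ)
    (h : L) (s' : Γ) (fresh : L) : (L → Option (Cell Γ L)) × L :=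
  match σ h with
  | none => (σ, h)
  | some cl =>
    match cl.left with
    | some l => (Function.update σ h (some ⟨cl.left, cl.right, s'⟩), l)
    | none =>
      (Function.update (Function.update σ h (some ⟨some fresh, cl.right, s'⟩))
        fresh (some ⟨none, some h, B⟩), fresh)

section

variable {Γ L : Type*}

@[simp]
lemma followR_none (σ : L → Option (Cell Γ L)) (m : ℕ) : followR σ none m = none := by
  induction m with
  | zero => rfl
  | succ m ih => exact ih

@[simp]
lemma followL_none (σ : L → Option (Cell Γ L)) (m : ℕ) : followL σ none m = none := by
  induction m with
  | zero => rfl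
  | succ m ih => exact ih

def IsDList (σ : L → Option (Cell Γ L)) (n : ℕ) (c : Fin (n + 1) → L)
    (S : Fin (n + 1) → Γ) : Prop :=
  ∀ i : Fin (n + 1), σ (c i) = some
    { left := if _ : i.val = 0 then none
              else some (c ⟨i.val - 1, (Nat.sub_le _ _).trans_lt i.isLt⟩),
      right := if h : i.val = n then none
               else some (c ⟨i.val + 1, Nat.succ_lt_succ (lt_of_le_of_ne i.is_le h)⟩),
      symbol := S i }

def padTape (B : Γ) {n : ℕ} (S : Fin (n + 1) → Γ) (j : ℤ) : Γ :=
  if h : 0 ≤ j ∧ j ≤ n then S ⟨j.toNat, by omega⟩ else B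

lemma padTape_update (B : Γ) {n : ℕ} (S : Fin (n + 1) → Γ) (k : Fin (n + 1)) (s : Γ)
    (j : ℤ) : padTape B (Function.update S k s) j = if j = k then s else padTape B S j := by
  simp only [padTape, Function.update_apply, Fin.ext_iff]
  split_ifs <;> first | rfl | omega

lemma Fin.cons_mk_of_ne_zero {α : Type*} {n m : ℕ} (x : α) (c : Fin n → α)
    (h : m < n + 1) (hm : m ≠ 0) :
    (Fin.cons x c : Fin (n + 1) → α) ⟨m, h⟩ = c ⟨m - 1, by omega⟩ := by
  obtain ⟨m, rfl⟩ := Nat.exists_eq_succ_of_ne_zero hm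
  rfl

lemma padTape_cons_succ (B : Γ) {n : ℕ} (S : Fin (n + 1) → Γ) (j : ℤ) :
    padTape B (Fin.cons B S : Fin (n + 2) → Γ) (j + 1) = padTape B S j := by
  by_cases hj : j = -1
  · subst hj
    simp [padTape]
  · unfold padTape
    split_ifs
    · rw [Fin.cons_mk_of_ne_zero _ _ _ (by omega)]
      congr 2
      omega
    all_goals first | rfl | omega

def pushLeft [DecidableEq L] (σ : L → Option (Cell Γ L)) (h x : L) (B : Γ) :
    L → Option (Cell Γ L) :=
  Function.update (Function.update σ h ((σ h).map fun cl => { cl with left := some x })) x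
    (some ⟨none, some h, B⟩)

lemma stepL_of_left_eq_some [DecidableEq L] {σ : L → Option (Cell Γ L)} {h l : L}
    {cl : Cell Γ L} (hcl : σ h = some cl) (hl : cl.left = some l) (B s' : Γ) (fresh : L) :
    stepL σ B h s' fresh = (Function.update σ h (some { cl with symbol := s' }), l) := by
  simp [stepL, hcl, hl]

lemma stepL_eq_stepL_pushLeft [DecidableEq L] {σ : L → Option (Cell Γ L)} {h : L}
    {cl : Cell Γ L} (hcl : σ h = some cl) (hl : cl.left = none) {fresh : L} (hfresh : h ≠ fresh)
    (B s' : Γ) : stepL σ B h s' fresh = stepL (pushLeft σ h fresh B) B h s' fresh := by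
  have hpush : pushLeft σ h fresh B h = some { cl with left := some fresh } := by
    simp [pushLeft, hfresh, hcl]
  rw [stepL_of_left_eq_some hpush rfl]
  simp only [stepL, hcl, hl, pushLeft]
  rw [Function.update_comm hfresh.symm, Function.update_idem]

namespace IsDList

variable {σ : L → Option (Cell Γ L)} {n : ℕ} {c : Fin (n + 1) → L} {S : Fin (n + 1) → Γ}

lemma followR_eq (hσ : IsDList σ n c S) (m : ℕ) (j : Fin (n + 1)) :
    followR σ (some (c j)) m = if h : j.val + m ≤ n then some (c ⟨j.val + m, by omega⟩)
      else none := by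
  induction m generalizing j with
  | zero => simp [followR, j.is_le]
  | succ m ih =>
    simp only [followR, Option.bind_some, hσ j]
    by_cases hj : j.val = n
    · simp [hj]
    · simp only [hj, dite_false]
      rw [ih ⟨j.val + 1, by omega⟩]
      simp only [Nat.add_assoc, Nat.add_comm 1 m]

lemma followL_eq (hσ : IsDList σ n c S) (m : ℕ) (j : Fin (n + 1)) :
    followL σ (some (c j)) m = if h : m ≤ j.val then some (c ⟨j.val - m, by omega⟩)
      else none := by
  induction m generalizing j with
  | zero => simp [followL]
  | succ m ih =>
    simp only [followL, Option.bind_some, hσ j]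
    by_cases hj : j.val = 0
    · simp [hj]
    · simp only [hj, dite_false]
      rw [ih ⟨j.val - 1, by omega⟩]
      dsimp only
      by_cases hm : m + 1 ≤ j.val
      · rw [dif_pos (by omega), dif_pos hm]
        simp only [Nat.sub_sub, Nat.add_comm 1 m]
      · rw [dif_neg (by omega), dif_neg hm]

lemma symAt_eq (hσ : IsDList σ n c S) (B : Γ) (j : Fin (n + 1)) :
    symAt σ B (some (c j)) = S j := by
  simp [symAt, hσ j]

lemma tapeOf_eq (hσ : IsDList σ n c S) (B : Γ) (k : Fin (n + 1)) :
    tapeOf σ B (c k) = fun i => padTape B S (k + i) := by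
  funext i
  by_cases hi : 0 ≤ i
  · simp only [tapeOf, if_pos hi, hσ.followR_eq, padTape]
    by_cases h : k.val + i.toNat ≤ n
    · rw [dif_pos h, dif_pos (by omega), hσ.symAt_eq]
      congr 2
      omega
    · rw [dif_neg h, dif_neg (by omega)]
      rfl
  · simp only [tapeOf, if_neg hi, hσ.followL_eq, padTape]
    by_cases h : (-i).toNat ≤ k.val
    · rw [dif_pos h, dif_pos (by omega), hσ.symAt_eq]
      congr 2
      omega
    · rw [dif_neg h, dif_neg (by omega)]
      rfl

lemma update_symbol [DecidableEq L] (hσ : IsDList σ n c S) (hinj : Function.Injective c)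
    {k : Fin (n + 1)} {cl : Cell Γ L} (hcl : σ (c k) = some cl) (s' : Γ) :
    IsDList (Function.update σ (c k) (some { cl with symbol := s' })) n c
      (Function.update S k s') := by
  intro i
  by_cases hik : i = k
  · subst hik
    rw [hσ i] at hcl
    cases hcl
    simp
  · rw [Function.update_of_ne (hinj.ne hik), Function.update_of_ne hik, hσ i]

lemma cons [DecidableEq L] (hσ : IsDList σ n c S) (hinj : Function.Injective c)
    {fresh : L} (hfresh : fresh ∉ Set.range c) (B : Γ) :
    IsDList (pushLeft σ (c 0) fresh B) (n + 1) (Fin.cons fresh c) (Fin.cons B S) := by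
  have hne : ∀ j, c j ≠ fresh := fun j h => hfresh ⟨j, h⟩
  intro i
  refine Fin.cases ?_ (fun j => ?_) i
  · simp [pushLeft]
  · by_cases hj : j = 0
    · subst hj
      simp [pushLeft, hne, hσ 0, eq_comm (a := 0), Fin.cons_mk_of_ne_zero]
    · have hj' : j.val ≠ 0 := fun h => hj (Fin.ext h)
      simp [pushLeft, hne, hinj.ne hj, hσ j, hj', Fin.cons_mk_of_ne_zero]

lemma tapeOf_pushLeft [DecidableEq L] (hσ : IsDList σ n c S) (hinj : Function.Injective c)
    {fresh : L} (hfresh : fresh ∉ Set.range c) (B : Γ) :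
    tapeOf (pushLeft σ (c 0) fresh B) B (c 0) = tapeOf σ B (c 0) := by
  have hcons := (hσ.cons hinj hfresh B).tapeOf_eq B (Fin.succ 0)
  rw [Fin.cons_succ] at hcons
  rw [hcons, hσ.tapeOf_eq]
  funext i
  simp [add_comm (1 : ℤ), padTape_cons_succ]

lemma tapeOf_stepL_of_ne_zero [DecidableEq L] (hσ : IsDList σ n c S)
    (hinj : Function.Injective c) {k : Fin (n + 1)} (hk : k.val ≠ 0) (B s' : Γ) (fresh : L) :
    tapeOf (stepL σ B (c k) s' fresh).1 B (stepL σ B (c k) s' fresh).2 =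
      fun i : ℤ => if i = 1 then s' else tapeOf σ B (c k) (i - 1) := by
  let k' : Fin (n + 1) := ⟨k.val - 1, by omega⟩
  rw [stepL_of_left_eq_some (hσ k) (by simp [hk, k'] : _ = some (c k')),
    (hσ.update_symbol hinj (hσ k) s').tapeOf_eq, hσ.tapeOf_eq]
  funext i
  have hshift : (k' : ℤ) + i = k + (i - 1) := by simp only [k']; omega
  simp only [hshift, padTape_update, add_eq_left, sub_eq_zero]

end IsDList

end

/-- on a well-formed doubly-linked list with head `c k`, the left-move
update realizes exactly the TM left-move transition on the induced tape:
the new induced tape `t'` satisfies `t' 1 = s'` and `t' i = t (i-1)` otherwise. -/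
theorem stepL_correct {Γ L : Type*} [DecidableEq L]
    (σ : L → Option (Cell Γ L)) (B : Γ)
    (n : ℕ) (c : Fin (n + 1) → L) (S : Fin (n + 1) → Γ)
    (hinj : Function.Injective c)
    (hcell : ∀ i : Fin (n + 1), σ (c i) = some
      { left := if _ : i.val = 0 then none
                else some (c ⟨i.val - 1, by have := i.isLt; omega⟩),
        right := if _ : i.val = n then none
                 else some (c ⟨i.val + 1, by have := i.isLt; omega⟩),
        symbol := S i })
    (k : Fin (n + 1)) (fresh : L) (hfresh : fresh ∉ Set.range c)
    (s' : Γ) :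
    tapeOf (stepL σ B (c k) s' fresh).1 B (stepL σ B (c k) s' fresh).2 =
      fun i : ℤ => if i = 1 then s' else tapeOf σ B (c k) (i - 1) := by
  have hσ : IsDList σ n c S := hcell
  by_cases hk : k.val = 0
  · obtain rfl : k = 0 := Fin.ext hk
    rw [stepL_eq_stepL_pushLeft (hσ 0) (by simp) (fun h => hfresh ⟨0, h⟩),
      ← hσ.tapeOf_pushLeft hinj hfresh]
    exact (hσ.cons hinj hfresh B).tapeOf_stepL_of_ne_zero
      (Fin.cons_injective_iff.2 ⟨hfresh, hinj⟩) (k := Fin.succ 0) (by simp) B s' fresh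
  · exact hσ.tapeOf_stepL_of_ne_zero hinj hk B s' fresh
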